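/- Let L be a finite meet-semilattice, X = {x₁,…,x_n} ⊆ L, and X̄ = {x₁,…,x_n,x_{n+1},…,x_{n+m}} the smallest factor-closed subset of L containing X. Let R be a commutative ring, k ≥ 2, 𝓕 : (S_n)^{k-2} → R any map; for each x ∈ X fix z_x ∈ X̄ with z_x ≤ x; let F : X̄ → R be a single function and set f(z) = ∑_{y ∈ X̄} μ(y,z) F(y), with μ the Möbius function of X̄ and ζ(u,v) = 1 if u ≤ v, 0 otherwise. Then Det_𝓕( (F(z_{x_{i₁}} ∧ x_{i₂} ∧ ⋯ ∧ x_{i_k}))_{1≤i₁,…,i_k≤n} ) = ∑_{1 ≤ k₁ < ⋯ < k_n ≤ n+m} ( ∏_{i=1}^n f(x_{k_i}) ) · Det_𝓕( (ζ(x_{k_{i₂}}, z_{x_{i₁}} ∧ x_{i₃} ∧ ⋯ ∧ x_{i_k}))_{1≤i₁,…,i_k≤n} ) · det( ζ(x_{k_i}, x_j) )_{1≤i,j≤n}. -/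

import Mathlib

/-!
Möbius inversion on the factor-closed set `X̄` writes every entry as
`F(z_{i₁} ∧ x_{i₂} ∧ x_{i₃} ∧ ⋯) = ∑_k ζ(x_k, z_{i₁} ∧ x_{i₃} ∧ ⋯) f(x_k) ζ(x_k, x_{i₂})`,
so once `σ₃, …, σ_k` are fixed, the `(i₁, i₂)`-matrix is a product of an `n × (n + m)` and an
`(n + m) × n` matrix. The Cauchy–Binet formula expands its determinant over the increasing tuples
`k₁ < ⋯ < k_n`, pulling out the column factors `f(x_{k_i})`, and summing over `σ₃, …, σ_k` with
weights `𝓕` reassembles the `𝓕`-determinants.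
-/

/-- The `𝓕`-determinant of a `k`-dimensional hypermatrix (`k = p + 2`), where the first two
indices are explicit and the remaining `p = k - 2` indices are gathered in a tuple:
`Det_𝓕(M) = ∑_{(σ₂,σ₃,…,σ_k)} sign(σ₂) ⋅ 𝓕(σ₃,…,σ_k) ⋅ ∏_i M_{i,σ₂(i),…,σ_k(i)}`. -/
def DetF {R : Type*} [CommRing R] {n p : ℕ}
    (𝓕 : (Fin p → Equiv.Perm (Fin n)) → R)
    (M : Fin n → Fin n → (Fin p → Fin n) → R) : R :=
  ∑ σ₂ : Equiv.Perm (Fin n), ∑ τ : Fin p → Equiv.Perm (Fin n),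
    ((Equiv.Perm.sign σ₂ : ℤ) : R) * 𝓕 τ * ∏ i : Fin n, M i (σ₂ i) (fun j => τ j i)

/-- The meet `a ⊓ v 0 ⊓ v 1 ⊓ ⋯` of an element `a` with a tuple `v` of elements of a
meet-semilattice. -/
def meetAll {L : Type*} [SemilatticeInf L] {p : ℕ} (a : L) (v : Fin p → L) : L :=
  (List.ofFn v).foldr (· ⊓ ·) a

open Equiv Finset Function Matrix

section meetAll

variable {L : Type*} [SemilatticeInf L] {p : ℕ}

lemma le_meetAll_iff {a c : L} {v : Fin p → L} :
    c ≤ meetAll a v ↔ c ≤ a ∧ ∀ l, c ≤ v l := by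
  induction p with
  | zero => simp [meetAll]
  | succ p ih =>
    simp only [meetAll, List.ofFn_succ, List.foldr_cons, le_inf_iff, Fin.forall_fin_succ] at ih ⊢
    rw [ih]
    tauto

lemma le_meetAll_inf_iff {a b c : L} {v : Fin p → L} :
    c ≤ meetAll (a ⊓ b) v ↔ c ≤ meetAll a v ∧ c ≤ b := by
  simp only [le_meetAll_iff, le_inf_iff]
  tauto

lemma meetAll_le (a : L) (v : Fin p → L) : meetAll a v ≤ a :=
  (le_meetAll_iff.1 le_rfl).1

end meetAll

section Moebius

variable {L R ι : Type*} [PartialOrder L] [LocallyFiniteOrder L] [DecidableEq L]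
  [DecidableRel ((· ≤ ·) : L → L → Prop)] [CommRing R] [Fintype ι]
  {x : ι → L} {a : L}

lemma sum_filter_le_mu_eq_ite (hinj : Injective x) (hdown : ∀ w ≤ a, w ∈ Set.range x)
    (b : L) : ∑ j : ι with x j ≤ a, IncidenceAlgebra.mu R b (x j) = if b = a then 1 else 0 := by
  -- `x` enumerates `Icc b a` exactly once, and the extra terms with `b ≰ x j` vanish.
  have hcover : ∀ w ∈ Icc b a, w ∉ Set.range x → IncidenceAlgebra.mu R b w = 0 :=
    fun w hw hwx => (hwx (hdown w (mem_Icc.1 hw).2)).elim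
  rw [← IncidenceAlgebra.sum_Icc_mu_right, ← sum_preimage x _ hinj.injOn _ hcover]
  refine (sum_subset (fun j hj => ?_) fun j hj hjb => ?_).symm
  · simp only [mem_preimage, mem_Icc] at hj
    simpa using hj.2
  · refine IncidenceAlgebra.apply_eq_zero_of_not_le (fun hbj => hjb ?_) _
    simp only [mem_filter, mem_univ, true_and] at hj
    simpa [mem_preimage] using ⟨hbj, hj⟩

lemma eq_sum_le_of_eq_sum_mu (hinj : Injective x) (hdown : ∀ w ≤ a, w ∈ Set.range x)
    (F f : L → R) (hf : ∀ v, f v = ∑ j, IncidenceAlgebra.mu R (x j) v * F (x j)) :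
    F a = ∑ j, if x j ≤ a then f (x j) else 0 := by
  rw [← sum_filter]
  simp_rw [hf]
  rw [sum_comm]
  simp_rw [← sum_mul, sum_filter_le_mu_eq_ite hinj hdown]
  obtain ⟨j₀, rfl⟩ := hdown a le_rfl
  simp_rw [boole_mul]
  rw [sum_eq_single j₀ (fun j _ hj => if_neg (hinj.ne hj)) (by simp), if_pos rfl]

end Moebius

lemma Tuple.sort_comp_perm_of_strictMono {α : Type*} [LinearOrder α] {n : ℕ}
    {κ : Fin n → α} (hκ : StrictMono κ) (e : Perm (Fin n)) : Tuple.sort (κ ∘ e) = e⁻¹ := by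
  refine (Tuple.eq_sort_iff.2 ⟨?_, fun i j hij h => (hij.ne (hκ.injective ?_)).elim⟩).symm
  · simpa [comp_assoc] using hκ.monotone
  · simpa using h

lemma sum_filter_injective_eq_sum_strictMono_sum_perm {M : Type*} [AddCommMonoid M] {n N : ℕ}
    (g : (Fin n → Fin N) → M) :
    ∑ φ : Fin n → Fin N with Injective φ, g φ =
      ∑ κ : Fin n → Fin N with ∀ i j : Fin n, i < j → κ i < κ j,
        ∑ e : Perm (Fin n), g (κ ∘ e) := by
  rw [← sum_product']
  refine (sum_bij' (fun q _ => q.1 ∘ q.2) (fun φ _ => (φ ∘ Tuple.sort φ, (Tuple.sort φ)⁻¹))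
    ?_ ?_ ?_ ?_ (fun _ _ => rfl)).symm
  · simp only [mem_product, mem_filter, mem_univ, true_and, and_true]
    rintro ⟨κ, e⟩ hκ
    exact (StrictMono.injective hκ).comp e.injective
  · simp only [mem_product, mem_filter, mem_univ, true_and, and_true]
    intro φ hφ
    exact (Tuple.monotone_sort φ).strictMono_of_injective (hφ.comp (Tuple.sort φ).injective)
  · simp only [mem_product, mem_filter, mem_univ, true_and, and_true]
    rintro ⟨κ, e⟩ hκ
    rw [Tuple.sort_comp_perm_of_strictMono hκ, inv_inv, comp_assoc, ← Perm.coe_mul,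
      mul_inv_cancel, Perm.coe_one, comp_id]
  · intro φ _
    rw [comp_assoc, ← Perm.coe_mul, mul_inv_cancel, Perm.coe_one, comp_id]

namespace Matrix

variable {R : Type*} [CommRing R]

lemma det_mul_eq_sum_prod_mul_det_submatrix {m N : Type*} [Fintype m] [DecidableEq m]
    [Fintype N] (A : Matrix m N R) (B : Matrix N m R) :
    (A * B).det = ∑ φ : m → N, (∏ i, B (φ i) i) * (A.submatrix id φ).det := by
  simp only [det_apply', mul_apply, prod_univ_sum, mul_sum, Fintype.piFinset_univ]
  rw [sum_comm]
  refine sum_congr rfl fun φ _ => sum_congr rfl fun σ _ => ?_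
  simp only [submatrix_apply, id, prod_mul_distrib]
  ring

theorem det_mul_eq_sum_strictMono {n N : ℕ} (A : Matrix (Fin n) (Fin N) R)
    (B : Matrix (Fin N) (Fin n) R) :
    (A * B).det = ∑ κ : Fin n → Fin N with ∀ i j : Fin n, i < j → κ i < κ j,
      (A.submatrix id κ).det * (B.submatrix κ id).det := by
  have hnoninj : ∀ φ : Fin n → Fin N, ¬ Injective φ → (A.submatrix id φ).det = 0 := by
    intro φ hφ
    obtain ⟨i, j, hij, hne⟩ : ∃ i j, φ i = φ j ∧ i ≠ j := by
      simpa [Injective] using hφ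
    exact det_zero_of_column_eq hne fun k => by simp [hij]
  rw [det_mul_eq_sum_prod_mul_det_submatrix, ← sum_subset (filter_subset (Injective ·) univ)
    fun φ _ hφ => by rw [hnoninj φ (by simpa using hφ), mul_zero],
    sum_filter_injective_eq_sum_strictMono_sum_perm]
  refine sum_congr rfl fun κ _ => ?_
  have hperm (e : Perm (Fin n)) :
      (A.submatrix id (κ ∘ e)).det = Perm.sign e * (A.submatrix id κ).det :=
    det_permute' e (A.submatrix id κ)
  simp_rw [hperm, ← mul_assoc, ← sum_mul, mul_comm _ (A.submatrix id κ).det,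
    det_apply' (B.submatrix κ id)]
  exact congrArg _ (sum_congr rfl fun e _ => mul_comm _ _)

end Matrix

lemma detF_eq_sum_det {R : Type*} [CommRing R] {n p : ℕ}
    (𝓕 : (Fin p → Perm (Fin n)) → R) (M : Fin n → Fin n → (Fin p → Fin n) → R) :
    DetF 𝓕 M = ∑ τ : Fin p → Perm (Fin n), 𝓕 τ * (of fun i j => M i j fun l => τ l i).det := by
  rw [DetF, sum_comm]
  refine sum_congr rfl fun τ _ => ?_
  rw [← det_transpose, det_apply', mul_sum]
  refine sum_congr rfl fun σ _ => ?_
  simp only [transpose_apply, of_apply]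
  ring

lemma detF_eq_sum_strictMono_of_factor {R : Type*} [CommRing R] {n N p : ℕ}
    (𝓕 : (Fin p → Perm (Fin n)) → R) (M : Fin n → Fin n → (Fin p → Fin n) → R)
    (Z : Fin n → Fin N → (Fin p → Fin n) → R) (g : Fin N → R) (C : Matrix (Fin N) (Fin n) R)
    (hM : ∀ i j t, M i j t = ∑ k, Z i k t * g k * C k j) :
    DetF 𝓕 M = ∑ κ : Fin n → Fin N with ∀ i j : Fin n, i < j → κ i < κ j,
      (∏ i, g (κ i)) * DetF 𝓕 (fun i j t => Z i (κ j) t) * (C.submatrix κ id).det := by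
  have hfactor (τ : Fin p → Perm (Fin n)) :
      of (fun i j => M i j fun l => τ l i) = (of fun i k => Z i k (fun l => τ l i) * g k) * C := by
    ext i j
    simp [mul_apply, hM]
  simp_rw [detF_eq_sum_det, hfactor, det_mul_eq_sum_strictMono, mul_sum, sum_mul]
  rw [sum_comm]
  refine sum_congr rfl fun κ _ => sum_congr rfl fun τ _ => ?_
  have hscale : (of fun i k => Z i k (fun l => τ l i) * g k).submatrix id κ =
      of fun i j => g (κ j) * of (fun i j => Z i (κ j) (fun l => τ l i)) i j := by
    ext i j
    simp [mul_comm]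
  rw [hscale, det_mul_row]
  ring

theorem li_expansion_detF_single_F_general {L R : Type*} [DecidableEq L]
    [SemilatticeInf L] [LocallyFiniteOrder L]
    [DecidableRel ((· ≤ ·) : L → L → Prop)] [CommRing R]
    {n m p : ℕ} (x : Fin (n + m) → L) (hinj : Function.Injective x)
    (hfc : ∀ (j : Fin (n + m)) (w : L), w ≤ x j → ∃ j' : Fin (n + m), x j' = w)
    (z : Fin n → L)
    (𝓕 : (Fin p → Equiv.Perm (Fin n)) → R)
    (F : L → R)
    (f : L → R)
    (hf : ∀ v, f v = ∑ j : Fin (n + m), IncidenceAlgebra.mu R (x j) v * F (x j)) :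
    DetF 𝓕 (fun i₁ i₂ t =>
        F (meetAll (z i₁ ⊓ x (Fin.castAdd m i₂)) (fun l => x (Fin.castAdd m (t l))))) =
      ∑ κ ∈ Finset.univ.filter
          (fun κ : Fin n → Fin (n + m) => ∀ i j : Fin n, i < j → κ i < κ j),
        (∏ i : Fin n, f (x (κ i))) *
          DetF 𝓕 (fun i₁ i₂ t =>
            if x (κ i₂) ≤ meetAll (z i₁) (fun l => x (Fin.castAdd m (t l))) then (1 : R)
            else 0) *
          Matrix.det (Matrix.of fun i j : Fin n =>
            if x (κ i) ≤ x (Fin.castAdd m j) then (1 : R) else 0) := by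
  have hentry (i j : Fin n) (t : Fin p → Fin n) :
      F (meetAll (z i ⊓ x (Fin.castAdd m j)) (fun l => x (Fin.castAdd m (t l)))) =
        ∑ k, (if x k ≤ meetAll (z i) (fun l => x (Fin.castAdd m (t l))) then (1 : R) else 0) *
          f (x k) * (if x k ≤ x (Fin.castAdd m j) then (1 : R) else 0) := by
    have hdown : ∀ w ≤ meetAll (z i ⊓ x (Fin.castAdd m j)) (fun l => x (Fin.castAdd m (t l))),
        w ∈ Set.range x :=
      fun w hw => hfc _ w (hw.trans ((meetAll_le _ _).trans inf_le_right))
    rw [eq_sum_le_of_eq_sum_mu hinj hdown F f hf]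
    refine sum_congr rfl fun k _ => ?_
    simp only [le_meetAll_inf_iff]
    split_ifs <;> simp_all
  rw [detF_eq_sum_strictMono_of_factor 𝓕 _ _ _ _ hentry]
  rfl

/-- same setting as Statement 10 but with a single function `F : X̄ → R` and
`f v = ∑_{y ∈ X̄} μ(y,v) F y`.  Then
`Det_𝓕((F(z_{x_{i₁}} ∧ x_{i₂} ∧ ⋯ ∧ x_{i_k}))) = ∑_{k₁<⋯<k_n} (∏ᵢ f(x_{k_i})) ⋅
Det_𝓕((ζ(x_{k_{i₂}}, z_{x_{i₁}} ∧ x_{i₃} ∧ ⋯ ∧ x_{i_k}))) ⋅ det(ζ(x_{k_i},x_j))`. -/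
theorem li_expansion_detF_single_F {L R : Type*} [Fintype L] [DecidableEq L]
    [SemilatticeInf L] [LocallyFiniteOrder L]
    [DecidableRel ((· ≤ ·) : L → L → Prop)] [CommRing R]
    {n m p : ℕ} (x : Fin (n + m) → L) (hinj : Function.Injective x)
    (hfc : ∀ (j : Fin (n + m)) (w : L), w ≤ x j → ∃ j' : Fin (n + m), x j' = w)
    (hmin : ∀ j : Fin (n + m), ∃ i : Fin n, x j ≤ x (Fin.castAdd m i))
    (z : Fin n → L) (hzmem : ∀ i, ∃ j : Fin (n + m), z i = x j)
    (hz : ∀ i : Fin n, z i ≤ x (Fin.castAdd m i))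
    (𝓕 : (Fin p → Equiv.Perm (Fin n)) → R)
    (F : L → R)
    (f : L → R)
    (hf : ∀ v, f v = ∑ j : Fin (n + m), IncidenceAlgebra.mu R (x j) v * F (x j)) :
    DetF 𝓕 (fun i₁ i₂ t =>
        F (meetAll (z i₁ ⊓ x (Fin.castAdd m i₂)) (fun l => x (Fin.castAdd m (t l))))) =
      ∑ κ ∈ Finset.univ.filter
          (fun κ : Fin n → Fin (n + m) => ∀ i j : Fin n, i < j → κ i < κ j),
        (∏ i : Fin n, f (x (κ i))) *
          DetF 𝓕 (fun i₁ i₂ t =>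
            if x (κ i₂) ≤ meetAll (z i₁) (fun l => x (Fin.castAdd m (t l))) then (1 : R)
            else 0) *
          Matrix.det (Matrix.of fun i j : Fin n =>
            if x (κ i) ≤ x (Fin.castAdd m j) then (1 : R) else 0) :=
  li_expansion_detF_single_F_general x hinj hfc z 𝓕 F f hf
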